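/- Fix ρ₀ > 0 and for p ∈ [1,∞) let P_p be the parabolic region with parameter ρ₀ (with P_2 = [ρ₀², ∞)) and ∂P_q its boundary (∂P_2 := [ρ₀², ∞)). Then for every p ∈ [2,∞): P_p = ⋃_{q ∈ [2,p]} ∂P_q. -/
import Mathlib


noncomputable section

/-- The parabolic region `P_p ⊆ ℂ` with parameter `ρ₀ > 0`:  for `p ≠ 2`,
`P_p = { x+iy : x ≥ (4ρ₀²/p)(1 − 1/p) + y²/(4ρ₀²(1 − 2/p)²) }`, and `P_2 = [ρ₀², ∞)`. -/
def parabolicRegion (ρ₀ p : ℝ) : Set ℂ :=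
  if p = 2 then {z : ℂ | z.im = 0 ∧ ρ₀ ^ 2 ≤ z.re}
  else {z : ℂ | 4 * ρ₀ ^ 2 / p * (1 - 1 / p) + z.im ^ 2 / (4 * ρ₀ ^ 2 * (1 - 2 / p) ^ 2) ≤ z.re}

/-- The boundary `∂P_p` of the parabolic region with parameter `ρ₀ > 0`:  for `p ≠ 2` it is
the parabola `x = (4ρ₀²/p)(1 − 1/p) + y²/(4ρ₀²(1 − 2/p)²)`, and `∂P_2 := [ρ₀², ∞)`. -/
def parabolicBoundary (ρ₀ p : ℝ) : Set ℂ :=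
  if p = 2 then {z : ℂ | z.im = 0 ∧ ρ₀ ^ 2 ≤ z.re}
  else {z : ℂ | 4 * ρ₀ ^ 2 / p * (1 - 1 / p) + z.im ^ 2 / (4 * ρ₀ ^ 2 * (1 - 2 / p) ^ 2) = z.re}

private lemma key_eq (ρ₀ y q : ℝ) (hq : q ≠ 0) :
    4 * ρ₀ ^ 2 / q * (1 - 1 / q) + y ^ 2 / (4 * ρ₀ ^ 2 * (1 - 2 / q) ^ 2)
      = ρ₀ ^ 2 - ρ₀ ^ 2 * (1 - 2 / q) ^ 2 + y ^ 2 / (4 * ρ₀ ^ 2 * (1 - 2 / q) ^ 2) := by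
  congr 1
  field_simp
  ring

private lemma mem_boundary_of (ρ₀ : ℝ) (p : ℝ) (hp : 2 < p) (z : ℂ)
    (s : ℝ) (hs0 : 0 < s) (hsp : s ≤ 1 - 2 / p)
    (hF : ρ₀ ^ 2 * (1 - s ^ 2) + z.im ^ 2 / (4 * ρ₀ ^ 2 * s ^ 2) = z.re) :
    ∃ q ∈ Set.Icc (2:ℝ) p, z ∈ parabolicBoundary ρ₀ q := by
  have hp0 : 0 < p := by linarith
  have h2p : 0 < 2 / p := by positivity
  have hs1 : s < 1 := by linarith
  have h1s : 0 < 1 - s := by linarith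
  have hq2 : 2 < 2 / (1 - s) := by
    rw [lt_div_iff₀ h1s]; nlinarith
  refine ⟨2 / (1 - s), ⟨le_of_lt hq2, ?_⟩, ?_⟩
  · rw [div_le_iff₀ h1s]
    have h2p' : 2 / p ≤ 1 - s := by linarith
    have := (div_le_iff₀ hp0).mp h2p'
    linarith
  · rw [parabolicBoundary, if_neg (ne_of_gt hq2)]
    have e1 : 2 / (2 / (1 - s)) = 1 - s := by field_simp
    have e2 : 1 / (2 / (1 - s)) = (1 - s) / 2 := one_div_div 2 (1 - s)
    have e3 : 4 * ρ₀ ^ 2 / (2 / (1 - s)) = 2 * ρ₀ ^ 2 * (1 - s) := by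
      rw [div_div_eq_mul_div]; ring
    show 4 * ρ₀ ^ 2 / (2 / (1 - s)) * (1 - 1 / (2 / (1 - s)))
        + z.im ^ 2 / (4 * ρ₀ ^ 2 * (1 - 2 / (2 / (1 - s))) ^ 2) = z.re
    rw [e1, e2, e3]
    rw [show (1 : ℝ) - (1 - s) = s by ring]
    rw [show 2 * ρ₀ ^ 2 * (1 - s) * (1 - (1 - s) / 2) = ρ₀ ^ 2 * (1 - s ^ 2) by ring]
    exact hF

private lemma boundary_subset (ρ₀ : ℝ) (hρ₀ : 0 < ρ₀) (p : ℝ) (hp : 2 < p)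
    (q : ℝ) (hq : q ∈ Set.Icc (2:ℝ) p) :
    parabolicBoundary ρ₀ q ⊆ parabolicRegion ρ₀ p := by
  intro z hz
  have hp0 : 0 < p := by linarith
  have hp2 : p ≠ 2 := ne_of_gt hp
  have hsp0 : 0 < 1 - 2 / p := by
    have : 2 / p < 1 := (div_lt_one hp0).mpr hp
    linarith
  rw [parabolicRegion, if_neg hp2]
  simp only [Set.mem_setOf_eq]
  rw [key_eq ρ₀ z.im p (ne_of_gt hp0)]
  by_cases hq2 : q = 2
  · subst hq2
    rw [parabolicBoundary, if_pos rfl] at hz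
    obtain ⟨him, hre⟩ := hz
    simp only [Set.mem_setOf_eq, him]
    have h2 : (0:ℝ) ≤ ρ₀ ^ 2 * (1 - 2 / p) ^ 2 := by positivity
    have h3 : (0:ℝ) ^ 2 / (4 * ρ₀ ^ 2 * (1 - 2 / p) ^ 2) = 0 := by simp
    rw [h3]
    linarith
  · have hq' : 2 < q := lt_of_le_of_ne hq.1 (Ne.symm hq2)
    have hq0 : 0 < q := by linarith
    rw [parabolicBoundary, if_neg hq2] at hz
    rw [Set.mem_setOf_eq, key_eq ρ₀ z.im q (ne_of_gt hq0)] at hz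
    have hsq0 : 0 < 1 - 2 / q := by
      have : 2 / q < 1 := (div_lt_one hq0).mpr hq'
      linarith
    have hle : 1 - 2 / q ≤ 1 - 2 / p := by
      have : 2 / p ≤ 2 / q := div_le_div_of_nonneg_left (by norm_num) hq0 hq.2
      linarith
    have hsq2 : (1 - 2 / q) ^ 2 ≤ (1 - 2 / p) ^ 2 := by nlinarith
    have h1 : ρ₀ ^ 2 - ρ₀ ^ 2 * (1 - 2 / p) ^ 2 ≤ ρ₀ ^ 2 - ρ₀ ^ 2 * (1 - 2 / q) ^ 2 := by
      nlinarith
    have h2 : z.im ^ 2 / (4 * ρ₀ ^ 2 * (1 - 2 / p) ^ 2)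
        ≤ z.im ^ 2 / (4 * ρ₀ ^ 2 * (1 - 2 / q) ^ 2) := by
      apply div_le_div_of_nonneg_left (by positivity) (by positivity)
      nlinarith
    linarith

/-- (Used in the proof of Theorem 3.2.)  For every `p ∈ [2,∞)` the parabolic region `P_p`
with parameter `ρ₀ > 0` is the union of the boundaries of the regions `P_q`, `q ∈ [2,p]`:
`P_p = ⋃_{q ∈ [2,p]} ∂P_q`. -/
theorem parabolicRegion_eq_iUnion_boundaries (ρ₀ : ℝ) (hρ₀ : 0 < ρ₀)
    (p : ℝ) (hp : 2 ≤ p) :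
    parabolicRegion ρ₀ p = ⋃ q ∈ Set.Icc (2 : ℝ) p, parabolicBoundary ρ₀ q := by
  have hRB : parabolicRegion ρ₀ 2 = parabolicBoundary ρ₀ 2 := by
    rw [parabolicRegion, parabolicBoundary, if_pos rfl, if_pos rfl]
  ext z
  simp only [Set.mem_iUnion, exists_prop]
  by_cases hp2 : p = 2
  · subst hp2
    constructor
    · intro h
      exact ⟨2, ⟨le_rfl, le_rfl⟩, hRB ▸ h⟩
    · rintro ⟨q, hq, hzq⟩
      have : q = 2 := le_antisymm hq.2 hq.1
      subst this
      rwa [hRB]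
  · have hp' : 2 < p := lt_of_le_of_ne hp (Ne.symm hp2)
    have hp0 : 0 < p := by linarith
    have hsp0 : 0 < 1 - 2 / p := by
      have : 2 / p < 1 := (div_lt_one hp0).mpr hp'
      linarith
    have hsp1 : 1 - 2 / p < 1 := by
      have : 0 < 2 / p := by positivity
      linarith
    constructor
    · intro hz
      rw [parabolicRegion, if_neg hp2] at hz
      rw [Set.mem_setOf_eq, key_eq ρ₀ z.im p (ne_of_gt hp0)] at hz
      by_cases him : z.im = 0
      · -- real axis case
        by_cases hxρ : ρ₀ ^ 2 ≤ z.re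
        · exact ⟨2, ⟨le_rfl, le_of_lt hp'⟩, by
            rw [parabolicBoundary, if_pos rfl]; exact ⟨him, hxρ⟩⟩
        · push_neg at hxρ
          set G : ℝ → ℝ := fun s => ρ₀ ^ 2 * (1 - s ^ 2) with hG
          have hcont : ContinuousOn G (Set.Icc 0 (1 - 2 / p)) := by fun_prop
          have hmem : z.re ∈ Set.Icc (G (1 - 2 / p)) (G 0) := by
            constructor
            · simp only [hG, him] at hz ⊢
              simp at hz
              nlinarith
            · simp only [hG]; nlinarith
          obtain ⟨s, hsmem, hGs⟩ := intermediate_value_Icc' (le_of_lt hsp0) hcont hmem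
          have hs0 : 0 < s := by
            rcases lt_or_eq_of_le hsmem.1 with h | h
            · exact h
            · exfalso; rw [← h] at hGs; simp [hG] at hGs; linarith
          apply mem_boundary_of ρ₀ p hp' z s hs0 hsmem.2
          rw [him]
          simpa using hGs
      · set F : ℝ → ℝ := fun s => ρ₀ ^ 2 * (1 - s ^ 2) + z.im ^ 2 / (4 * ρ₀ ^ 2 * s ^ 2) with hFdef
        have hFsp : F (1 - 2 / p) ≤ z.re := by
          simp only [hFdef]; nlinarith [hz]
        have hx0 : 0 < z.re := by
          have hA : 0 < 1 - (1 - 2/p) ^ 2 := by nlinarith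
          have h1 : 0 < ρ₀ ^ 2 * (1 - (1 - 2/p) ^ 2) := mul_pos (by positivity) hA
          have h2 : 0 ≤ z.im ^ 2 / (4 * ρ₀ ^ 2 * (1 - 2/p) ^ 2) := by positivity
          nlinarith [hz]
        have hy0 : 0 < |z.im| := abs_pos.mpr him
        have hd0 : 0 < 2 * ρ₀ * Real.sqrt z.re := by
          have := Real.sqrt_pos.mpr hx0; positivity
        set ε : ℝ := min (1 - 2 / p) (|z.im| / (2 * ρ₀ * Real.sqrt z.re)) with hε
        have hε0 : 0 < ε := lt_min hsp0 (by positivity)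
        have hεsp : ε ≤ 1 - 2 / p := min_le_left _ _
        have hFε : z.re ≤ F ε := by
          have hε2 : ε ≤ |z.im| / (2 * ρ₀ * Real.sqrt z.re) := min_le_right _ _
          have h1 : 2 * ρ₀ * Real.sqrt z.re * ε ≤ |z.im| := by
            rw [← le_div_iff₀' hd0]; exact hε2
          have hsq : Real.sqrt z.re ^ 2 = z.re := Real.sq_sqrt hx0.le
          have h2 : 4 * ρ₀ ^ 2 * z.re * ε ^ 2 ≤ z.im ^ 2 := by
            nlinarith [mul_le_mul h1 h1 (by positivity) (abs_nonneg z.im), hsq,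
              sq_abs z.im]
          have h3 : z.re ≤ z.im ^ 2 / (4 * ρ₀ ^ 2 * ε ^ 2) := by
            rw [le_div_iff₀ (by positivity)]; nlinarith
          have hε1 : ε < 1 := lt_of_le_of_lt hεsp hsp1
          have h4 : 0 ≤ ρ₀ ^ 2 * (1 - ε ^ 2) := by
            have : 0 < 1 - ε ^ 2 := by nlinarith
            positivity
          simp only [hFdef]; linarith
        have hcont : ContinuousOn F (Set.Icc ε (1 - 2 / p)) := by
          apply ContinuousOn.add (by fun_prop)
          apply ContinuousOn.div continuousOn_const (by fun_prop)
          intro s hs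
          have : 0 < s := lt_of_lt_of_le hε0 hs.1
          positivity
        obtain ⟨s, hsmem, hFs⟩ := intermediate_value_Icc' hεsp hcont ⟨hFsp, hFε⟩
        exact mem_boundary_of ρ₀ p hp' z s (lt_of_lt_of_le hε0 hsmem.1) hsmem.2 hFs
    · rintro ⟨q, hq, hzq⟩
      exact boundary_subset ρ₀ hρ₀ p hp' q hq hzq
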